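/- If g_i is bounded above and below on A_i by positive constants g_{i,sup}, g_{i,inf}, then the minimal energy over the constrained class E⁺(A_i, a_i, g_i) = {ν ∈ M⁺(A_i) ∩ E : ∫ g_i dν = a_i} satisfies a_i²/(g_{i,sup}² C(A_i)) ≤ inf{‖ν‖² : ν ∈ E⁺(A_i,a_i,g_i)} ≤ a_i²/(g_{i,inf}² C(A_i)), where C(A_i) = 1/inf{‖ν‖² : ν ∈ M⁺(A_i), ν(X)=1, ν ∈ E} is the interior capacity of A_i. -/

import Mathlib

open MeasureTheory
open scoped ENNReal

/-- Mutual energy of two nonnegative measures w.r.t. the kernel `κ`. -/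
noncomputable def mutualE {X : Type*} [MeasurableSpace X] (κ : X → X → ℝ)
    (ν μ : Measure X) : ℝ :=
  ∫ x, ∫ y, κ x y ∂μ ∂ν

/-- `ν` has finite energy w.r.t. `κ`. -/
def FiniteEnergy {X : Type*} [MeasurableSpace X] (κ : X → X → ℝ) (ν : Measure X) : Prop :=
  ∫⁻ x, ∫⁻ y, ENNReal.ofReal |κ x y| ∂ν ∂ν ≠ ⊤

/-- The minimal energy over `E⁺(A, a, g) = {ν ∈ M⁺(A) ∩ E : ∫ g dν = a}` (in `ℝ≥0∞`). -/
noncomputable def setMinEnergy {X : Type*} [MeasurableSpace X] (κ : X → X → ℝ)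
    (A : Set X) (g : X → ℝ) (a : ℝ) : ℝ≥0∞ :=
  ⨅ (ν : Measure X)
    (_ : ν Aᶜ = 0 ∧ FiniteEnergy κ ν ∧ ∫ x, g x ∂ν = a),
    ENNReal.ofReal (mutualE κ ν ν)

/-- The (interior, Wiener) capacity of `A`:
`C(A) = 1 / inf{‖ν‖² : ν ∈ M⁺(A) ∩ E, ν(X) = 1}`, with the convention `1/0 = ∞`. -/
noncomputable def setCap {X : Type*} [MeasurableSpace X] (κ : X → X → ℝ)
    (A : Set X) : ℝ≥0∞ :=
  (⨅ (ν : Measure X)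
    (_ : ν Aᶜ = 0 ∧ FiniteEnergy κ ν ∧ ν Set.univ = 1),
    ENNReal.ofReal (mutualE κ ν ν))⁻¹

/-!
Both bounds come from rescaling measures. A measure `μ` on `A` with `∫ g dμ = a` has mass
`m ≥ a / g_sup`, and `m⁻¹ μ` competes for the capacity, so `‖μ‖² ≥ m² / C(A) ≥ a² / (g_sup² C(A))`.
Conversely, a unit measure `ν` on `A` has `b = ∫ g dν ≥ g_inf`, so `(a / b) ν ∈ E⁺(A, a, g)` has
energy `(a / b)² ‖ν‖² ≤ (a / g_inf)² ‖ν‖²`.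
-/

section

variable {X : Type*} [MeasurableSpace X] {κ : X → X → ℝ} {A : Set X} {μ : Measure X}
  {g : X → ℝ} {ginf gsup a : ℝ}

theorem mutualE_smul_self (κ : X → X → ℝ) (μ : Measure X) (c : ℝ≥0∞) :
    mutualE κ (c • μ) (c • μ) = c.toReal ^ 2 * mutualE κ μ μ := by
  simp only [mutualE, integral_smul_measure, smul_eq_mul, integral_const_mul]
  ring

theorem ofReal_mutualE_smul_self {c : ℝ≥0∞} (hc : c ≠ ∞) :
    ENNReal.ofReal (mutualE κ (c • μ) (c • μ)) = c ^ 2 * ENNReal.ofReal (mutualE κ μ μ) := by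
  rw [mutualE_smul_self, ENNReal.ofReal_mul (by positivity), ← ENNReal.toReal_pow,
    ENNReal.ofReal_toReal (ENNReal.pow_ne_top hc)]

theorem FiniteEnergy.smul (h : FiniteEnergy κ μ) {c : ℝ≥0∞} (hc : c ≠ ∞) :
    FiniteEnergy κ (c • μ) := by
  unfold FiniteEnergy at h ⊢
  simp only [lintegral_smul_measure, smul_eq_mul]
  rw [lintegral_const_mul' _ _ hc]
  exact ENNReal.mul_ne_top hc (ENNReal.mul_ne_top hc h)

theorem measure_univ_sq_div_setCap_le [IsFiniteMeasure μ] (hμA : μ Aᶜ = 0)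
    (hμ : FiniteEnergy κ μ) :
    μ Set.univ ^ 2 / setCap κ A ≤ ENNReal.ofReal (mutualE κ μ μ) := by
  rcases eq_or_ne (μ Set.univ) 0 with h0 | h0
  · simp [h0]
  set m := μ Set.univ
  have hm : m ≠ ∞ := measure_ne_top μ _
  have hunit : (m⁻¹ • μ) Aᶜ = 0 ∧ FiniteEnergy κ (m⁻¹ • μ) ∧ (m⁻¹ • μ) Set.univ = 1 :=
    ⟨by simp [hμA], hμ.smul (ENNReal.inv_ne_top.mpr h0), by simp [m, ENNReal.inv_mul_cancel h0 hm]⟩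
  calc m ^ 2 / setCap κ A ≤ m ^ 2 * ENNReal.ofReal (mutualE κ (m⁻¹ • μ) (m⁻¹ • μ)) := by
        rw [setCap, div_eq_mul_inv, inv_inv]
        gcongr
        exact iInf₂_le (m⁻¹ • μ) hunit
    _ = ENNReal.ofReal (mutualE κ μ μ) := by
        rw [ofReal_mutualE_smul_self (ENNReal.inv_ne_top.mpr h0), ← mul_assoc, ← mul_pow,
          ENNReal.mul_inv_cancel h0 hm, one_pow, one_mul]

theorem setMinEnergy_le_of_integral_pos (ha : 0 ≤ a) (hμA : μ Aᶜ = 0)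
    (hμ : FiniteEnergy κ μ) (hb : 0 < ∫ x, g x ∂μ) :
    setMinEnergy κ A g a ≤
      ENNReal.ofReal (a / ∫ x, g x ∂μ) ^ 2 * ENNReal.ofReal (mutualE κ μ μ) := by
  set c := ENNReal.ofReal (a / ∫ x, g x ∂μ)
  have hint : ∫ x, g x ∂(c • μ) = a := by
    rw [integral_smul_measure, ENNReal.toReal_ofReal (by positivity), smul_eq_mul,
      div_mul_cancel₀ _ hb.ne']
  rw [← ofReal_mutualE_smul_self ENNReal.ofReal_ne_top]
  exact iInf₂_le _ ⟨by simp [hμA], hμ.smul ENNReal.ofReal_ne_top, hint⟩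

theorem integral_le_mul_measureReal_univ [IsFiniteMeasure μ] {c : ℝ} (hg : Integrable g μ)
    (hgc : ∀ᵐ x ∂μ, g x ≤ c) : ∫ x, g x ∂μ ≤ c * μ.real Set.univ := by
  simpa [mul_comm] using integral_mono_ae hg (integrable_const c) hgc

theorem mul_measureReal_univ_le_integral [IsFiniteMeasure μ] {c : ℝ} (hg : Integrable g μ)
    (hgc : ∀ᵐ x ∂μ, c ≤ g x) : c * μ.real Set.univ ≤ ∫ x, g x ∂μ := by
  simpa [mul_comm] using integral_mono_ae (integrable_const c) hg hgc

theorem isFiniteMeasure_of_integrable_of_ae_le {c : ℝ} (hc : 0 < c) (hg : Integrable g μ)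
    (hgc : ∀ᵐ x ∂μ, c ≤ g x) : IsFiniteMeasure μ :=
  ⟨(measure_mono_ae (hgc.mono fun _ hx _ => hx.trans (Real.le_norm_self _))).trans_lt
    (hg.measure_norm_ge_lt_top hc)⟩

theorem ofReal_sq_div_sq_div_setCap_le (ha : 0 < a) (hginf : 0 < ginf)
    (hbounds : ∀ x ∈ A, ginf ≤ g x ∧ g x ≤ gsup) (hμA : μ Aᶜ = 0) (hμ : FiniteEnergy κ μ)
    (hint : ∫ x, g x ∂μ = a) :
    ENNReal.ofReal (a ^ 2 / gsup ^ 2) / setCap κ A ≤ ENNReal.ofReal (mutualE κ μ μ) := by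
  have hA : ∀ᵐ x ∂μ, ginf ≤ g x ∧ g x ≤ gsup := Filter.mem_of_superset (mem_ae_iff.mpr hμA) hbounds
  have hg : Integrable g μ := by
    by_contra h
    exact ha.ne' (hint ▸ integral_undef h)
  have := isFiniteMeasure_of_integrable_of_ae_le hginf hg (hA.mono fun _ => And.left)
  have hle : a ≤ gsup * μ.real Set.univ :=
    hint ▸ integral_le_mul_measureReal_univ hg (hA.mono fun _ => And.right)
  have hgsup : 0 < gsup := by
    by_contra! h
    nlinarith [measureReal_nonneg (μ := μ) (s := Set.univ)]
  have hmass : ENNReal.ofReal (a ^ 2 / gsup ^ 2) ≤ μ Set.univ ^ 2 := by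
    rw [← ENNReal.ofReal_toReal (measure_ne_top μ Set.univ),
      ← ENNReal.ofReal_pow ENNReal.toReal_nonneg, ← div_pow]
    exact ENNReal.ofReal_le_ofReal
      (pow_le_pow_left₀ (by positivity) ((div_le_iff₀' hgsup).mpr hle) 2)
  exact (ENNReal.div_le_div_right hmass _).trans (measure_univ_sq_div_setCap_le hμA hμ)

theorem setMinEnergy_le_ofReal_sq_div_sq_mul [IsProbabilityMeasure μ]
    (hg : AEStronglyMeasurable g μ) (ha : 0 ≤ a) (hginf : 0 < ginf)
    (hbounds : ∀ x ∈ A, ginf ≤ g x ∧ g x ≤ gsup) (hμA : μ Aᶜ = 0) (hμ : FiniteEnergy κ μ) :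
    setMinEnergy κ A g a ≤ ENNReal.ofReal (a ^ 2 / ginf ^ 2) * ENNReal.ofReal (mutualE κ μ μ) := by
  have hA : ∀ᵐ x ∂μ, ginf ≤ g x ∧ g x ≤ gsup := Filter.mem_of_superset (mem_ae_iff.mpr hμA) hbounds
  have hgi : Integrable g μ := Integrable.mono' (integrable_const gsup) hg <|
    hA.mono fun _ hx => by rw [Real.norm_of_nonneg (hginf.le.trans hx.1)]; exact hx.2
  have hb : ginf ≤ ∫ x, g x ∂μ := by
    simpa using mul_measureReal_univ_le_integral hgi (hA.mono fun _ => And.left)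
  have hb₀ : 0 < ∫ x, g x ∂μ := hginf.trans_le hb
  refine (setMinEnergy_le_of_integral_pos ha hμA hμ hb₀).trans ?_
  rw [← ENNReal.ofReal_pow (div_nonneg ha hb₀.le), ← div_pow]
  gcongr ?_ * _
  exact ENNReal.ofReal_le_ofReal
    (pow_le_pow_left₀ (div_nonneg ha hb₀.le) (div_le_div_of_nonneg_left ha hginf hb) 2)

end

theorem setMinEnergy_estimates_general {X : Type*} [TopologicalSpace X] [MeasurableSpace X]
    [BorelSpace X]
    (κ : X → X → ℝ)
    (A : Set X)
    (g : X → ℝ) (hg : Continuous g)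
    (ginf gsup : ℝ) (hginf : 0 < ginf)
    (hbounds : ∀ x ∈ A, ginf ≤ g x ∧ g x ≤ gsup)
    (a : ℝ) (ha : 0 < a) :
    ENNReal.ofReal (a ^ 2 / gsup ^ 2) / setCap κ A ≤ setMinEnergy κ A g a ∧
      setMinEnergy κ A g a ≤ ENNReal.ofReal (a ^ 2 / ginf ^ 2) / setCap κ A := by
  constructor
  · exact le_iInf₂ fun μ ⟨hμA, hμ, hint⟩ =>
      ofReal_sq_div_sq_div_setCap_le ha hginf hbounds hμA hμ hint
  · have hc : ENNReal.ofReal (a ^ 2 / ginf ^ 2) ≠ 0 := (ENNReal.ofReal_pos.mpr (by positivity)).ne'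
    rw [setCap, div_eq_mul_inv, inv_inv]
    simp_rw [ENNReal.mul_iInf_of_ne hc ENNReal.ofReal_ne_top]
    refine le_iInf₂ fun μ ⟨hμA, hμ, hμ1⟩ => ?_
    have : IsProbabilityMeasure μ := ⟨hμ1⟩
    exact setMinEnergy_le_ofReal_sq_div_sq_mul hg.aestronglyMeasurable ha.le hginf hbounds hμA hμ

/-- If `0 < g_inf ≤ g ≤ g_sup < ∞` on `A`, then
`a²/(g_sup² C(A)) ≤ inf{‖ν‖² : ν ∈ E⁺(A,a,g)} ≤ a²/(g_inf² C(A))`. -/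
theorem setMinEnergy_estimates {X : Type*} [TopologicalSpace X] [MeasurableSpace X]
    [BorelSpace X]
    (κ : X → X → ℝ) (hκsym : ∀ x y, κ x y = κ y x)
    (hκpd : ∀ ν₁ ν₂ : Measure X,
      0 ≤ mutualE κ ν₁ ν₁ - 2 * mutualE κ ν₁ ν₂ + mutualE κ ν₂ ν₂)
    (A : Set X) (hA : IsClosed A)
    (g : X → ℝ) (hg : Continuous g)
    (ginf gsup : ℝ) (hginf : 0 < ginf)
    (hbounds : ∀ x ∈ A, ginf ≤ g x ∧ g x ≤ gsup)
    (a : ℝ) (ha : 0 < a) :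
    ENNReal.ofReal (a ^ 2 / gsup ^ 2) / setCap κ A ≤ setMinEnergy κ A g a ∧
      setMinEnergy κ A g a ≤ ENNReal.ofReal (a ^ 2 / ginf ^ 2) / setCap κ A :=
  setMinEnergy_estimates_general κ A g hg ginf gsup hginf hbounds a ha
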